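/- For every integer n ≥ 1, γ_n ≤ 2^(n − n̂), where n̂ = ⌊log₂(n+1)⌋. -/

import Mathlib

/-- A finite subset of the hypercube `Q_n = (ZMod 2)^n` is dominating if every point of the
hypercube is at Hamming distance at most 1 from some element of the subset. -/
def IsDominating {n : ℕ} (Δ : Finset (Fin n → ZMod 2)) : Prop :=
  ∀ y : Fin n → ZMod 2, ∃ x ∈ Δ, hammingDist x y ≤ 1

/-- The minimal domination number `γ_n` of the `n`-dimensional hypercube. -/
noncomputable def gamma (n : ℕ) : ℕ :=
  sInf {k | ∃ Δ : Finset (Fin n → ZMod 2), IsDominating Δ ∧ Δ.card = k}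

/-!
Let `m = n̂`, so that `2^m - 1 ≤ n`, and choose a parity-check map `H : (ZMod 2)^n → (ZMod 2)^m`
whose columns `H eᵢ` run through every nonzero vector (for `n = 2^m - 1` this is the Hamming
code). Its kernel is dominating: if `H y ≠ 0` then `H y = H eᵢ` for some `i`, and `y - eᵢ` is a
codeword at distance 1 from `y`. Since `H` is surjective, the kernel has `2^(n - m)` elements.
-/

open Finset Module

theorem gamma_le_card {n : ℕ} {Δ : Finset (Fin n → ZMod 2)} (hΔ : IsDominating Δ) :
    gamma n ≤ #Δ :=
  Nat.sInf_le ⟨Δ, hΔ, rfl⟩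

theorem hammingNorm_single_le {ι : Type*} [Fintype ι] [DecidableEq ι] {β : ι → Type*}
    [∀ i, Zero (β i)] [∀ i, DecidableEq (β i)] (i : ι) (b : β i) :
    hammingNorm (Pi.single i b) ≤ 1 :=
  have supp : ∀ j, Pi.single i b j ≠ 0 → j = i := fun j hj =>
    by_contra fun h => hj (Pi.single_eq_of_ne h b)
  card_le_one.2 fun j hj k hk => by
    simp only [mem_filter, mem_univ, true_and] at hj hk
    rw [supp j hj, supp k hk]

theorem exists_forall_ne_mem_range {α : Type*} [Fintype α] {n : ℕ} (a : α)
    (h : Fintype.card α ≤ n + 1) : ∃ v : Fin n → α, ∀ b ≠ a, b ∈ Set.range v := by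
  classical
  obtain ⟨e⟩ : Nonempty ({b // b ≠ a} ↪ Fin n) := by
    apply Function.Embedding.nonempty_of_card_le
    rw [Fintype.card_subtype_compl, Fintype.card_subtype_eq, Fintype.card_fin]
    omega
  exact ⟨Function.extend e Subtype.val fun _ => a,
    fun b hb => ⟨e ⟨b, hb⟩, e.injective.extend_apply _ _ _⟩⟩

theorem natCard_ker_of_surjective {K V W : Type*} [Field K] [Finite K] [AddCommGroup V]
    [Module K V] [FiniteDimensional K V] [AddCommGroup W] [Module K W] {f : V →ₗ[K] W}
    (hf : Function.Surjective f) :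
    Nat.card (LinearMap.ker f) = Nat.card K ^ (finrank K V - finrank K W) := by
  rw [natCard_eq_pow_finrank (K := K), ← LinearMap.finrank_range_add_finrank_ker f,
    LinearMap.range_eq_top.2 hf, finrank_top, Nat.add_sub_cancel_left]

section
variable {n : ℕ} {M : Type*} [AddCommGroup M] [Module (ZMod 2) M] {v : Fin n → M}

theorem surjective_linearCombination (hv : ∀ w ≠ 0, w ∈ Set.range v) :
    Function.Surjective (Fintype.linearCombination (ZMod 2) v) := by
  classical
  intro w
  obtain rfl | hw := eq_or_ne w 0
  · exact ⟨0, map_zero _⟩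
  · obtain ⟨i, rfl⟩ := hv w hw
    exact ⟨Pi.single i 1, by simp [Fintype.linearCombination_apply_single]⟩

theorem isDominating_linearCombination_eq_zero [DecidableEq M] (hv : ∀ w ≠ 0, w ∈ Set.range v) :
    IsDominating {x | Fintype.linearCombination (ZMod 2) v x = 0} := by
  intro y
  set s := Fintype.linearCombination (ZMod 2) v y
  obtain hs | hs := eq_or_ne s 0
  · exact ⟨y, by simpa using hs, by simp⟩
  obtain ⟨i, hi⟩ := hv s hs
  refine ⟨y - Pi.single i 1, ?_, ?_⟩
  · simp [map_sub, Fintype.linearCombination_apply_single, hi, s]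
  · rw [hammingDist_eq_hammingNorm, neg_sub, sub_add_cancel]
    exact hammingNorm_single_le i 1

end

theorem gamma_le_two_pow_sub {n m : ℕ} (h : 2 ^ m ≤ n + 1) : gamma n ≤ 2 ^ (n - m) := by
  obtain ⟨v, hv⟩ := exists_forall_ne_mem_range (0 : Fin m → ZMod 2) (n := n) (by simpa using h)
  calc gamma n ≤ #{x | Fintype.linearCombination (ZMod 2) v x = 0} :=
        gamma_le_card (isDominating_linearCombination_eq_zero hv)
    _ = Nat.card (LinearMap.ker (Fintype.linearCombination (ZMod 2) v)) := by
        rw [← Fintype.card_subtype, ← Nat.card_eq_fintype_card]; rfl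
    _ = 2 ^ (n - m) := by
        rw [natCard_ker_of_surjective (surjective_linearCombination hv)]; simp

theorem stmt_5_general (n : ℕ) : gamma n ≤ 2 ^ (n - Nat.log 2 (n + 1)) :=
  gamma_le_two_pow_sub (Nat.pow_log_le_self 2 n.succ_ne_zero)

/-- For every `n ≥ 1`, `γ_n ≤ 2^(n - n̂)` where `n̂ = ⌊log₂ (n+1)⌋`. -/
theorem stmt_5 (n : ℕ) (hn : 1 ≤ n) : gamma n ≤ 2 ^ (n - Nat.log 2 (n + 1)) :=
  stmt_5_general n
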